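/- For all ξ, η ∈ ℝ³, the modulation function M_{+,+}(ξ,η) = |⟨ξ-η⟩ - ⟨ξ⟩ + ⟨η⟩| satisfies M_{+,+}(ξ,η) ≥ 1/⟨ξ-η⟩ · 1/C for some absolute constant C > 0; equivalently, ⟨ξ-η⟩ · (⟨ξ-η⟩ - ⟨ξ⟩ + ⟨η⟩) ≥ c > 0 for an absolute constant c, where ⟨ζ⟩ = (1+|ζ|²)^{1/2}. -/

import Mathlib

/-!
With `a = ⟨ξ - η⟩`, `b = ⟨ξ⟩`, `d = ⟨η⟩`, `u = |ξ - η|`, `v = |η|`, the claim `a (a - b + d) ≥ 1/2`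
is `a b ≤ a² + a d - 1/2`. By the triangle inequality `b ≤ ⟨u + v⟩`, and after squaring the
worst case `|ξ| = u + v` reduces to `2 a u v ≤ (2a² - 1) d`, which squares to the polynomial
inequality `4 (1 + u²) u² v² ≤ (1 + 2u²)² (1 + v²)`. The constant `1/2` is sharp: take
`η = t ξ₀`, `ξ - η = s ξ₀` with `t → ∞`, then `s → ∞`.
-/

/-- The Japanese bracket ⟨ξ⟩ = (1 + |ξ|²)^{1/2}. -/
noncomputable def jbr (ξ : EuclideanSpace ℝ (Fin 3)) : ℝ := Real.sqrt (1 + ‖ξ‖ ^ 2)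

open Real

lemma two_mul_sqrt_one_add_sq_mul_mul_le (u v : ℝ) :
    2 * √(1 + u ^ 2) * (u * v) ≤ (1 + 2 * u ^ 2) * √(1 + v ^ 2) := by
  refine le_of_sq_le_sq ?_ (by positivity)
  rw [mul_pow, mul_pow (1 + 2 * u ^ 2), mul_pow, sq_sqrt (by positivity),
    sq_sqrt (by positivity)]
  nlinarith [sq_nonneg u, sq_nonneg v, mul_nonneg (sq_nonneg u) (sq_nonneg v)]

lemma one_half_le_sqrt_one_add_sq_mul_sub_add (u v : ℝ) :
    1 / 2 ≤ √(1 + u ^ 2) * (√(1 + u ^ 2) - √(1 + (u + v) ^ 2) + √(1 + v ^ 2)) := by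
  set a := √(1 + u ^ 2)
  set d := √(1 + v ^ 2)
  have ha2 : a ^ 2 = 1 + u ^ 2 := sq_sqrt (by positivity)
  have hd2 : d ^ 2 = 1 + v ^ 2 := sq_sqrt (by positivity)
  have ha1 : 1 ≤ a := one_le_sqrt.mpr (by nlinarith [sq_nonneg u])
  have hd1 : 1 ≤ d := one_le_sqrt.mpr (by nlinarith [sq_nonneg v])
  have key : 2 * a * (u * v) ≤ (1 + 2 * u ^ 2) * d := two_mul_sqrt_one_add_sq_mul_mul_le u v
  suffices a * √(1 + (u + v) ^ 2) ≤ a ^ 2 + a * d - 1 / 2 by linarith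
  refine le_of_sq_le_sq ?_ (by nlinarith)
  rw [mul_pow, sq_sqrt (by positivity : (0 : ℝ) ≤ 1 + (u + v) ^ 2)]
  -- the squared gap is `1/4 + a ((1 + 2u²) d - 2 a u v)`
  linear_combination a * key - (a ^ 2 + 2 * a * d) * ha2 - a ^ 2 * hd2

lemma one_half_le_sqrt_one_add_norm_sq_mul_modulation {E : Type*} [SeminormedAddCommGroup E]
    (ξ η : E) :
    1 / 2 ≤ √(1 + ‖ξ - η‖ ^ 2) *
      (√(1 + ‖ξ - η‖ ^ 2) - √(1 + ‖ξ‖ ^ 2) + √(1 + ‖η‖ ^ 2)) := by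
  have hξ : √(1 + ‖ξ‖ ^ 2) ≤ √(1 + (‖ξ - η‖ + ‖η‖) ^ 2) := by
    gcongr
    exact norm_le_norm_sub_add ξ η
  refine (one_half_le_sqrt_one_add_sq_mul_sub_add ‖ξ - η‖ ‖η‖).trans ?_
  exact mul_le_mul_of_nonneg_left (by linarith) (sqrt_nonneg _)

theorem modulation_plus_plus_lower_bound :
    ∃ c : ℝ, 0 < c ∧ ∀ ξ η : EuclideanSpace ℝ (Fin 3),
      jbr (ξ - η) * (jbr (ξ - η) - jbr ξ + jbr η) ≥ c :=
  ⟨1 / 2, by norm_num, one_half_le_sqrt_one_add_norm_sq_mul_modulation⟩
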